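/- Let Q > 2 and κ = Q/(Q-2). Suppose (fₘ) is a sequence of nonnegative measurable functions on a measure space and there exist constants c ≥ 1, K ≥ 1 and exponents pₘ = p·κ^m such that (∫ fₘ₊₁)^(1/κ) ≤ c·K^m·∫ fₘ with fₘ = g^(pₘ) for a fixed measurable g. Then sup-norm bound: limsup_m (∫ g^(pₘ))^(1/pₘ) ≤ (cK^A)^(B) (∫ g^p)^(1/p) for constants A, B depending only on κ, i.e. the Moser iteration converges: ess sup g ≤ C (∫ g^p)^(1/p) with C = c^(κ/(p(κ-1))) K^(κ²/(p(κ-1)²)). -/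

import Mathlib

/-!
Put `J m = (∫ g ^ (p κ^m))^(κ^(-m))`. Raising the hypothesis to the power `κ^(-m)` gives
`J (m + 1) ≤ (c K^m)^(κ^(-m)) J m`, hence `J m ≤ c^(∑ κ^(-j)) K^(∑ j κ^(-j)) J 0`, and the two
series sum to `κ/(κ-1)` and `κ/(κ-1)^2`. So the `L^(p κ^m)` norms of `g` are bounded by one
constant `M`, and Chebyshev's inequality gives `μ {t ≤ g} ≤ (M/t)^(p κ^m) → 0` for all `t > M`.
-/

open MeasureTheory Filter Topology Finset

lemma Real.prod_rpow_le_rpow_of_hasSum {ι : Type*} {a S : ℝ} {f : ι → ℝ} (ha : 1 ≤ a)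
    (hf : ∀ i, 0 ≤ f i) (hfS : HasSum f S) (s : Finset ι) :
    ∏ i ∈ s, a ^ f i ≤ a ^ S := by
  rw [← Real.rpow_sum_of_pos (by linarith)]
  exact Real.rpow_le_rpow_of_exponent_le ha (sum_le_hasSum s (fun i _ ↦ hf i) hfS)

lemma le_prod_range_mul_of_le_mul {J b : ℕ → ℝ} (hb : ∀ m, 0 ≤ b m)
    (h : ∀ m, J (m + 1) ≤ b m * J m) (m : ℕ) :
    J m ≤ (∏ j ∈ range m, b j) * J 0 := by
  induction m with
  | zero => simp
  | succ m ih =>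
    calc J (m + 1) ≤ b m * J m := h m
      _ ≤ b m * ((∏ j ∈ range m, b j) * J 0) := mul_le_mul_of_nonneg_left ih (hb m)
      _ = (∏ j ∈ range (m + 1), b j) * J 0 := by rw [prod_range_succ]; ring

lemma prod_range_mul_pow_rpow_geometric_le {c K r : ℝ} (hc : 1 ≤ c) (hK : 1 ≤ K)
    (hr₀ : 0 ≤ r) (hr₁ : r < 1) (m : ℕ) :
    ∏ j ∈ range m, (c * K ^ (j : ℝ)) ^ r ^ j ≤ c ^ (1 - r)⁻¹ * K ^ (r / (1 - r) ^ 2) := by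
  have hr : ‖r‖ < 1 := by rwa [Real.norm_of_nonneg hr₀]
  have hsplit : ∀ j : ℕ, (c * K ^ (j : ℝ)) ^ r ^ j = c ^ r ^ j * K ^ (j * r ^ j) := fun j ↦ by
    rw [Real.mul_rpow (by positivity) (by positivity), ← Real.rpow_mul (by positivity)]
  simp_rw [hsplit, prod_mul_distrib]
  gcongr
  · exact Real.prod_rpow_le_rpow_of_hasSum hc (fun j ↦ by positivity)
      (hasSum_geometric_of_lt_one hr₀ hr₁) _
  · exact Real.prod_rpow_le_rpow_of_hasSum hK (fun j ↦ by positivity)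
      (hasSum_coe_mul_geometric_of_norm_lt_one hr) _

lemma le_rpow_pow_of_rpow_inv_le {I : ℕ → ℝ} {κ c K : ℝ} (hI : ∀ m, 0 ≤ I m) (hκ : 1 < κ)
    (hc : 1 ≤ c) (hK : 1 ≤ K) (h : ∀ m : ℕ, I (m + 1) ^ (1 / κ) ≤ c * K ^ (m : ℝ) * I m)
    (m : ℕ) :
    I m ≤ (c ^ (κ / (κ - 1)) * K ^ (κ / (κ - 1) ^ 2) * I 0) ^ κ ^ m := by
  have hstep : ∀ m : ℕ,
      I (m + 1) ^ κ⁻¹ ^ (m + 1) ≤ (c * K ^ (m : ℝ)) ^ κ⁻¹ ^ m * I m ^ κ⁻¹ ^ m := by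
    intro m
    calc I (m + 1) ^ κ⁻¹ ^ (m + 1) = (I (m + 1) ^ κ⁻¹) ^ κ⁻¹ ^ m := by
          rw [← Real.rpow_mul (hI _), pow_succ']
      _ ≤ (c * K ^ (m : ℝ) * I m) ^ κ⁻¹ ^ m :=
          Real.rpow_le_rpow (Real.rpow_nonneg (hI _) _) (by simpa only [one_div] using h m)
            (by positivity)
      _ = (c * K ^ (m : ℝ)) ^ κ⁻¹ ^ m * I m ^ κ⁻¹ ^ m :=
          Real.mul_rpow (by positivity) (hI m)
  have hprod : ∏ j ∈ range m, (c * K ^ (j : ℝ)) ^ κ⁻¹ ^ j ≤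
      c ^ (κ / (κ - 1)) * K ^ (κ / (κ - 1) ^ 2) := by
    have hκ' : κ - 1 ≠ 0 := by linarith
    convert prod_range_mul_pow_rpow_geometric_le hc hK (inv_nonneg.2 (by linarith))
      (inv_lt_one_of_one_lt₀ hκ) m using 3 <;> field_simp
  calc I m = (I m ^ κ⁻¹ ^ m) ^ κ ^ m := by
        rw [← Real.rpow_mul (hI m), ← mul_pow, inv_mul_cancel₀ (by positivity), one_pow,
          Real.rpow_one]
    _ ≤ ((∏ j ∈ range m, (c * K ^ (j : ℝ)) ^ κ⁻¹ ^ j) * I 0) ^ κ ^ m := by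
        refine Real.rpow_le_rpow (Real.rpow_nonneg (hI m) _) ?_ (by positivity)
        simpa using le_prod_range_mul_of_le_mul (J := fun m ↦ I m ^ κ⁻¹ ^ m)
          (fun m ↦ by positivity) hstep m
    _ ≤ (c ^ (κ / (κ - 1)) * K ^ (κ / (κ - 1) ^ 2) * I 0) ^ κ ^ m := by
        have := hI 0
        gcongr

section EssSup

variable {α : Type*} [MeasurableSpace α] {μ : Measure α}

lemma integrable_rpow_of_ae_le [IsFiniteMeasure μ] {g : α → ℝ} {B q : ℝ} (hg : ∀ x, 0 ≤ g x)
    (hmeas : AEMeasurable g μ) (hB : ∀ᵐ x ∂μ, g x ≤ B) (hq : 0 ≤ q) :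
    Integrable (fun x ↦ g x ^ q) μ := by
  refine .of_bound (hmeas.pow_const q).aestronglyMeasurable (B ^ q) ?_
  filter_upwards [hB] with x hx
  rw [Real.norm_of_nonneg (Real.rpow_nonneg (hg x) q)]
  exact Real.rpow_le_rpow (hg x) hx hq

lemma measure_le_eq_zero_of_integral_rpow_le [IsFiniteMeasure μ] {g : α → ℝ} {q : ℕ → ℝ}
    {M t : ℝ} (hg : ∀ x, 0 ≤ g x) (hint : ∀ m, Integrable (fun x ↦ g x ^ q m) μ)
    (hq : Tendsto q atTop atTop) (hM : 0 ≤ M) (hMt : M < t)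
    (hbound : ∀ m, ∫ x, g x ^ q m ∂μ ≤ M ^ q m) :
    μ {x | t ≤ g x} = 0 := by
  have ht : 0 < t := hM.trans_lt hMt
  have hchebyshev : ∀ᶠ m in atTop, μ.real {x | t ≤ g x} ≤ (M / t) ^ q m := by
    filter_upwards [hq.eventually_ge_atTop 0] with m hqm
    have hmarkov := mul_meas_ge_le_integral_of_nonneg
      (Eventually.of_forall fun x ↦ Real.rpow_nonneg (hg x) (q m)) (hint m) (t ^ q m)
    rw [Real.div_rpow hM ht.le, le_div_iff₀' (by positivity)]
    have hsub : μ.real {x | t ≤ g x} ≤ μ.real {x | t ^ q m ≤ g x ^ q m} :=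
      measureReal_mono fun x hx ↦ Real.rpow_le_rpow ht.le hx hqm
    calc t ^ q m * μ.real {x | t ≤ g x} ≤ t ^ q m * μ.real {x | t ^ q m ≤ g x ^ q m} := by
          gcongr
      _ ≤ M ^ q m := hmarkov.trans (hbound m)
  have hlim : Tendsto (fun m ↦ (M / t) ^ q m) atTop (𝓝 0) :=
    (tendsto_rpow_atTop_of_base_lt_one _ (by linarith [div_nonneg hM ht.le])
      ((div_lt_one ht).2 hMt)).comp hq
  exact (measureReal_eq_zero_iff).1 ((ge_of_tendsto hlim hchebyshev).antisymm measureReal_nonneg)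

lemma ae_le_of_integral_rpow_le [IsFiniteMeasure μ] {g : α → ℝ} {q : ℕ → ℝ} {M : ℝ}
    (hg : ∀ x, 0 ≤ g x) (hint : ∀ m, Integrable (fun x ↦ g x ^ q m) μ)
    (hq : Tendsto q atTop atTop) (hM : 0 ≤ M) (hbound : ∀ m, ∫ x, g x ^ q m ∂μ ≤ M ^ q m) :
    ∀ᵐ x ∂μ, g x ≤ M := by
  obtain ⟨u, -, hMu, hu⟩ := exists_seq_strictAnti_tendsto M
  have hlt : ∀ n, ∀ᵐ x ∂μ, g x < u n := fun n ↦ by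
    simpa only [ae_iff, not_lt] using
      measure_le_eq_zero_of_integral_rpow_le hg hint hq hM (hMu n) hbound
  filter_upwards [ae_all_iff.2 hlt] with x hx
  exact ge_of_tendsto' hu fun n ↦ (hx n).le

lemma Real.essSup_le_of_ae_le_of_nonneg {g : α → ℝ} {M : ℝ} (hg : ∀ x, 0 ≤ g x) (hM : 0 ≤ M)
    (h : ∀ᵐ x ∂μ, g x ≤ M) : essSup g μ ≤ M := by
  rcases eq_or_ne μ 0 with rfl | hμ
  -- over the zero measure every real number is an a.e. upper bound, so `essSup` is the junk `0`
  · rw [essSup, ae_zero, Real.limsup_of_not_isCoboundedUnder]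
    · exact hM
    · rintro ⟨b, hb⟩
      linarith [hb (b - 1) (by simp)]
  · have := ae_neBot.2 hμ
    exact _root_.essSup_le_of_ae_le M h (isCoboundedUnder_le_of_le _ hg)

lemma Real.essSup_le_of_integral_rpow_le [IsFiniteMeasure μ] {g : α → ℝ} {q : ℕ → ℝ} {M : ℝ}
    (hg : ∀ x, 0 ≤ g x) (hmeas : AEMeasurable g μ) (hq₀ : ∀ m, 0 ≤ q m)
    (hq : Tendsto q atTop atTop) (hM : 0 ≤ M) (hbound : ∀ m, ∫ x, g x ^ q m ∂μ ≤ M ^ q m) :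
    essSup g μ ≤ M := by
  by_cases hbdd : IsBoundedUnder (· ≤ ·) (ae μ) g
  · obtain ⟨B, hB⟩ := hbdd
    have hint m := integrable_rpow_of_ae_le hg hmeas (eventually_map.1 hB) (hq₀ m)
    exact Real.essSup_le_of_ae_le_of_nonneg hg hM (ae_le_of_integral_rpow_le hg hint hq hM hbound)
  -- `essSup` of a function that is not essentially bounded is the junk value `0`
  · rw [essSup, Real.limsup_of_not_isBoundedUnder hbdd]
    exact hM

end EssSup

/-- The abstract Moser iteration lemma: a reverse-Hölder chain of integral
inequalities with exponents pₘ = p·κ^m, κ = Q/(Q-2), yields an essential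
supremum bound by the L^p norm. -/
theorem moser_iteration
    {α : Type*} [MeasurableSpace α] (μ : Measure α) [IsFiniteMeasure μ]
    (g : α → ℝ) (hg : ∀ x, 0 ≤ g x) (hmeas : Measurable g)
    (Q p c K κ : ℝ) (hQ : 2 < Q) (hκ : κ = Q / (Q - 2))
    (hp : 0 < p) (hc : 1 ≤ c) (hK : 1 ≤ K)
    (hiter : ∀ m : ℕ,
      (∫ x, g x ^ (p * κ ^ (m + 1)) ∂μ) ^ (1 / κ) ≤
        c * K ^ (m : ℝ) * ∫ x, g x ^ (p * κ ^ m) ∂μ) :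
    essSup g μ ≤
      c ^ (κ / (p * (κ - 1))) * K ^ (κ ^ 2 / (p * (κ - 1) ^ 2)) *
        (∫ x, g x ^ p ∂μ) ^ (1 / p) := by
  have hκ₁ : 1 < κ := by rw [hκ, lt_div_iff₀ (by linarith)]; linarith
  have hI : ∀ m : ℕ, 0 ≤ ∫ x, g x ^ (p * κ ^ m) ∂μ := fun m ↦
    integral_nonneg fun x ↦ Real.rpow_nonneg (hg x) _
  have hI₀ : 0 ≤ ∫ x, g x ^ p ∂μ := integral_nonneg fun x ↦ Real.rpow_nonneg (hg x) _
  set C := c ^ (κ / (κ - 1)) * K ^ (κ / (κ - 1) ^ 2) * ∫ x, g x ^ p ∂μ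
  have hnorm : ∀ m : ℕ, ∫ x, g x ^ (p * κ ^ m) ∂μ ≤ (C ^ (1 / p)) ^ (p * κ ^ m) := fun m ↦ by
    rw [← Real.rpow_mul (by positivity), show 1 / p * (p * κ ^ m) = κ ^ m by field_simp]
    simpa using le_rpow_pow_of_rpow_inv_le hI hκ₁ hc hK hiter m
  have hexp : κ / (κ - 1) ^ 2 * (1 / p) ≤ κ ^ 2 / (p * (κ - 1) ^ 2) := by
    rw [show κ ^ 2 / (p * (κ - 1) ^ 2) = κ * (κ / (κ - 1) ^ 2 * (1 / p)) by field_simp]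
    exact le_mul_of_one_le_left (by positivity) hκ₁.le
  calc essSup g μ ≤ C ^ (1 / p) :=
        Real.essSup_le_of_integral_rpow_le hg hmeas.aemeasurable (fun m ↦ by positivity)
          ((tendsto_pow_atTop_atTop_of_one_lt hκ₁).const_mul_atTop hp) (by positivity) hnorm
    _ = c ^ (κ / (p * (κ - 1))) * K ^ (κ / (κ - 1) ^ 2 * (1 / p)) *
        (∫ x, g x ^ p ∂μ) ^ (1 / p) := by
      rw [Real.mul_rpow (by positivity) hI₀, Real.mul_rpow (by positivity) (by positivity),
        ← Real.rpow_mul (by positivity), ← Real.rpow_mul (by positivity),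
        show κ / (κ - 1) * (1 / p) = κ / (p * (κ - 1)) by field_simp]
    _ ≤ _ := mul_le_mul_of_nonneg_right (mul_le_mul_of_nonneg_left
        (Real.rpow_le_rpow_of_exponent_le hK hexp) (by positivity)) (by positivity)
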